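/- arXiv:math/0109038 — 4 statements merged into one kernel-verified Lean document; each statement's English description precedes it below -/
import Mathlib

section
/- Let $z_0, z_1, \dots, z_m$ be nonzero complex numbers with $z_0 z_1 \cdots z_m = 1$ and $z_j \neq 1$ for all $j$. Then $\sum_{i=0}^m \frac{\prod_{j=0}^{i-1} z_j}{\prod_{j \neq i} (1 - z_j)} = 0$ (where the empty product for $i=0$ equals $1$). -/
open Finset

/-- Trigonometric partial fraction identity: if `z₀ z₁ ⋯ zₘ = 1` with all `zⱼ ≠ 0` and
`zⱼ ≠ 1`, then `∑_{i=0}^m (∏_{j<i} zⱼ) / ∏_{j≠i} (1 - zⱼ) = 0`. -/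
theorem trig_partial_fraction_identity {m : ℕ} (z : Fin (m + 1) → ℂ)
    (hz0 : ∀ j, z j ≠ 0) (hz1 : ∀ j, z j ≠ 1) (hprod : ∏ j, z j = 1) :
    ∑ i : Fin (m + 1),
      (∏ j ∈ Finset.univ.filter (fun j => j < i), z j) /
        ∏ j ∈ Finset.univ.erase i, (1 - z j) = 0 := by
  set D := ∏ j, (1 - z j) with hD
  have h1z : ∀ j, 1 - z j ≠ 0 := fun j => sub_ne_zero.2 fun h => hz1 j h.symm
  have hDne : D ≠ 0 := Finset.prod_ne_zero_iff.2 fun j _ => h1z j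
  set Q : ℕ → ℂ := fun n => ∏ j ∈ Finset.univ.filter (fun j : Fin (m+1) => (j : ℕ) < n), z j with hQ
  have key : ∀ i : Fin (m + 1),
      (∏ j ∈ Finset.univ.filter (fun j => j < i), z j) /
        ∏ j ∈ Finset.univ.erase i, (1 - z j) = (Q i - Q (i + 1)) / D := by
    intro i
    have hfilt : (Finset.univ.filter (fun j : Fin (m+1) => j < i))
        = Finset.univ.filter (fun j : Fin (m+1) => (j : ℕ) < (i : ℕ)) := by
      apply Finset.filter_congr; intro j _; exact Iff.rfl
    have hins : (Finset.univ.filter (fun j : Fin (m+1) => (j : ℕ) < (i : ℕ) + 1))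
        = insert i (Finset.univ.filter (fun j : Fin (m+1) => (j : ℕ) < (i : ℕ))) := by
      ext j
      simp only [Finset.mem_filter, Finset.mem_univ, true_and, Finset.mem_insert,
        Fin.ext_iff]
      omega
    have hQi1 : Q (i + 1) = z i * Q i := by
      rw [hQ]
      simp only
      rw [hins, Finset.prod_insert (by simp)]
    have hDe : D = (1 - z i) * ∏ j ∈ Finset.univ.erase i, (1 - z j) :=
      (Finset.mul_prod_erase _ _ (Finset.mem_univ i)).symm
    have hEne : (∏ j ∈ Finset.univ.erase i, (1 - z j)) ≠ 0 :=
      Finset.prod_ne_zero_iff.2 fun j _ => h1z j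
    rw [hfilt, hQi1]
    rw [hQ]
    simp only
    rw [hDe, div_eq_div_iff hEne (mul_ne_zero (h1z i) hEne)]
    ring
  rw [Finset.sum_congr rfl (fun i _ => key i), ← Finset.sum_div]
  rw [Fin.sum_univ_eq_sum_range (fun n => Q n - Q (n+1)) (m+1), Finset.sum_range_sub' Q (m+1)]
  have hQ0 : Q 0 = 1 := by simp [hQ]
  have hQm : Q (m+1) = 1 := by
    rw [hQ]; simp only
    rw [Finset.filter_true_of_mem (fun j _ => j.isLt), hprod]
  rw [hQ0, hQm, sub_self, zero_div]
end

section
/- For $f = \frac{e^{x-2y}}{xy(x+y)}$, the sums of iterated constant terms over the two orthogonal bases agree: $\mathrm{ICT}_{x,y} f + \mathrm{ICT}_{x,x+y} f = \mathrm{ICT}_{y,x} f + \mathrm{ICT}_{y,x+y} f = \frac{10}{3}$. -/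
/- The two orthogonal-basis expansions of the generalized constant term
`CT^𝒜(f)` of `f = e^{x-2y}/(xy(x+y))` for the arrangement `{x=0, y=0, x+y=0}` agree:
`ICT_{x,y} f + ICT_{x,x+y} f = ICT_{y,x} f + ICT_{y,x+y} f = 10/3`.
The iterated constant terms are modeled via iterated Laurent series as in the previous
statements. -/

noncomputable section
open PowerSeries

/-- The iterated constant term: coefficient of the outer variable to the power `0`,
then of the inner variable to the power `0`. -/
def ICT2 (f : LaurentSeries (LaurentSeries ℂ)) : ℂ := (f.coeff 0).coeff 0

/-- The inner variable, as an element of the base Laurent series field. -/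
def innerVar : LaurentSeries ℂ := HahnSeries.single 1 1

/-- The outer variable. -/
def outerVar : LaurentSeries (LaurentSeries ℂ) := HahnSeries.single 1 1

/-- `e^{cU}` in the outer variable, with `c` in the base field. -/
def expOuter (c : LaurentSeries ℂ) : LaurentSeries (LaurentSeries ℂ) :=
  (HahnSeries.ofPowerSeries ℤ (LaurentSeries ℂ)) (rescale c (PowerSeries.exp (LaurentSeries ℂ)))

/-- `e^{cx}` in the inner variable, `c : ℂ`. -/
def expInner (c : ℂ) : LaurentSeries ℂ :=
  (HahnSeries.ofPowerSeries ℤ ℂ) (rescale c (PowerSeries.exp ℂ))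

/-- `f` in `ℂ((x))((y))`: constant term first in `y`, then in `x`. -/
def f_xy : LaurentSeries (LaurentSeries ℂ) :=
  HahnSeries.C (expInner 1) * expOuter (-2) *
    (HahnSeries.C innerVar * outerVar * (HahnSeries.C innerVar + outerVar))⁻¹

/-- `f` in `ℂ((y))((x))`: constant term first in `x`, then in `y`. -/
def f_yx : LaurentSeries (LaurentSeries ℂ) :=
  HahnSeries.C (expInner (-2)) * expOuter 1 *
    (outerVar * HahnSeries.C innerVar * (outerVar + HahnSeries.C innerVar))⁻¹

/-- `f` after the substitution `u = x+y`, in `ℂ((x))((u))`. -/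
def f_x_xy : LaurentSeries (LaurentSeries ℂ) :=
  HahnSeries.C (expInner 3) * expOuter (-2) *
    (HahnSeries.C innerVar * outerVar * (outerVar - HahnSeries.C innerVar))⁻¹

/-- `f` after the substitution `u = x+y`, in `ℂ((y))((u))`. -/
def f_y_xy : LaurentSeries (LaurentSeries ℂ) :=
  HahnSeries.C (expInner (-3)) * expOuter 1 *
    ((outerVar - HahnSeries.C innerVar) * HahnSeries.C innerVar * outerVar)⁻¹


/-! Each of the four expansions is `e^{kx + cu} / (x u (u + s x))` with `s = ±1`. The
`u⁰`-coefficient is a residue at `u = 0`: writing `x u (u + s x) = u P(u)`, it is the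
`u¹`-coefficient of `e^{kx} e^{cu} / P(u)`, namely `e^{kx} ((c/s) x⁻² - s⁻² x⁻³)`, whose
`x⁰`-coefficient is `(c/s) k²/2 - k³/(6 s²)`. -/

theorem PowerSeries.coeff_one_mul_inv {K : Type*} [Field K] (F P : PowerSeries K)
    (hP : constantCoeff P ≠ 0) :
    coeff 1 (F * P⁻¹) = (coeff 1 F * constantCoeff P - constantCoeff F * coeff 1 P)
      / constantCoeff P ^ 2 := by
  have hP' : coeff 1 (P * P⁻¹) = 0 := by simp [PowerSeries.mul_inv_cancel P hP]
  rw [coeff_one_mul, constantCoeff_inv] at hP' ⊢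
  field_simp at hP' ⊢
  linear_combination (constantCoeff F) * hP'

theorem HahnSeries.coeff_zero_ofPowerSeries_mul_single_neg {R : Type*} [Semiring R]
    (F : PowerSeries R) (n : ℕ) (r : R) :
    (ofPowerSeries ℤ R F * single (-n : ℤ) r).coeff 0 = PowerSeries.coeff n F * r := by
  rw [← add_neg_cancel (n : ℤ), coeff_mul_single_add, ofPowerSeries_apply_coeff]

theorem HahnSeries.inv_single_one_mul_ofPowerSeries {K : Type*} [Field K] (P : PowerSeries K)
    (hP : constantCoeff P ≠ 0) :
    (single 1 1 * ofPowerSeries ℤ K P)⁻¹ = single (-1) 1 * ofPowerSeries ℤ K P⁻¹ := by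
  refine inv_eq_of_mul_eq_one_right ?_
  calc single 1 1 * ofPowerSeries ℤ K P * (single (-1) 1 * ofPowerSeries ℤ K P⁻¹)
      = single 1 1 * single (-1) 1 * ofPowerSeries ℤ K (P * P⁻¹) := by rw [map_mul]; ring
    _ = 1 := by rw [PowerSeries.mul_inv_cancel P hP, single_mul_single]; simp

theorem HahnSeries.coeff_zero_ofPowerSeries_mul_inv_single_one_mul {K : Type*} [Field K]
    (F P : PowerSeries K) (hP : constantCoeff P ≠ 0) :
    (ofPowerSeries ℤ K F * (single 1 1 * ofPowerSeries ℤ K P)⁻¹).coeff 0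
      = PowerSeries.coeff 1 (F * P⁻¹) := by
  rw [inv_single_one_mul_ofPowerSeries P hP, mul_left_comm, ← map_mul, mul_comm,
    ← Nat.cast_one, coeff_zero_ofPowerSeries_mul_single_neg, mul_one]

theorem coeff_zero_C_mul_expOuter_mul_inv (a c : LaurentSeries ℂ)
    (P : PowerSeries (LaurentSeries ℂ)) (hP : constantCoeff P ≠ 0) :
    (HahnSeries.C a * expOuter c * (outerVar * HahnSeries.ofPowerSeries ℤ _ P)⁻¹).coeff 0
      = a * ((c * constantCoeff P - coeff 1 P) / constantCoeff P ^ 2) := by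
  have exp_const : constantCoeff (rescale c (exp (LaurentSeries ℂ))) = 1 := by
    rw [← coeff_zero_eq_constantCoeff_apply, coeff_rescale, coeff_exp]; simp
  have exp_linear : coeff 1 (rescale c (exp (LaurentSeries ℂ))) = c := by
    rw [coeff_rescale, coeff_exp]; simp
  rw [expOuter, outerVar, ← HahnSeries.ofPowerSeries_C, ← map_mul,
    HahnSeries.coeff_zero_ofPowerSeries_mul_inv_single_one_mul _ _ hP, coeff_one_mul_inv _ _ hP]
  simp only [coeff_C_mul, map_mul, constantCoeff_C, exp_const, exp_linear]
  ring

theorem coeff_zero_expInner_mul_C_mul_innerVar_inv_pow (k r : ℂ) (n : ℕ) :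
    (expInner k * (HahnSeries.C r * innerVar⁻¹ ^ n)).coeff 0 = r * k ^ n / n.factorial := by
  rw [innerVar, HahnSeries.inv_single, HahnSeries.single_pow, inv_one, one_pow, smul_neg,
    nsmul_one, HahnSeries.C_apply, HahnSeries.single_mul_single, zero_add, mul_one, expInner,
    HahnSeries.coeff_zero_ofPowerSeries_mul_single_neg, coeff_rescale, coeff_exp]
  simp only [div_eq_mul_inv, one_mul, map_inv₀, map_natCast]
  ring

/-- `e^{kx + cu} / (x u (u + s x))`, with `x = innerVar` and `u = outerVar`. -/
def expDivArrangement (k c s : ℂ) : LaurentSeries (LaurentSeries ℂ) :=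
  HahnSeries.C (expInner k) * expOuter (HahnSeries.C c) *
    (HahnSeries.C innerVar * outerVar * (outerVar + HahnSeries.C (HahnSeries.C s * innerVar)))⁻¹

theorem innerVar_ne_zero : innerVar ≠ 0 := HahnSeries.single_ne_zero one_ne_zero

theorem ICT2_expDivArrangement (k c s : ℂ) (hs : s ≠ 0) :
    ICT2 (expDivArrangement k c s) = c / s * k ^ 2 / 2 - k ^ 3 / (6 * s ^ 2) := by
  set x := innerVar
  set P : PowerSeries (LaurentSeries ℂ) := C x * (X + C (HahnSeries.C s * x))
  have hx : x ≠ 0 := innerVar_ne_zero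
  have hsx : HahnSeries.C s * x ≠ 0 := mul_ne_zero (by simpa using hs) hx
  have denom : HahnSeries.C x * outerVar * (outerVar + HahnSeries.C (HahnSeries.C s * x))
      = outerVar * HahnSeries.ofPowerSeries ℤ _ P := by
    simp only [P, map_mul, map_add, HahnSeries.ofPowerSeries_C, HahnSeries.ofPowerSeries_X,
      outerVar]
    ring
  have p0 : constantCoeff P = x * (HahnSeries.C s * x) := by
    simp only [P, map_mul, map_add, constantCoeff_C, constantCoeff_X, zero_add]
  have p1 : coeff 1 P = x := by
    simp only [P, coeff_C_mul, map_add, coeff_one_X, coeff_C, one_ne_zero, if_false, add_zero,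
      mul_one]
  have residue : (HahnSeries.C (expInner k) * expOuter (HahnSeries.C c) *
      (outerVar * HahnSeries.ofPowerSeries ℤ _ P)⁻¹).coeff 0
      = expInner k * (HahnSeries.C (c / s) * x⁻¹ ^ 2 - HahnSeries.C (1 / s ^ 2) * x⁻¹ ^ 3) := by
    rw [coeff_zero_C_mul_expOuter_mul_inv _ _ _ (p0 ▸ mul_ne_zero hx hsx), p0, p1]
    simp only [map_div₀, map_one, map_pow]
    field_simp
  rw [ICT2, expDivArrangement, denom, residue, mul_sub, HahnSeries.coeff_sub,
    coeff_zero_expInner_mul_C_mul_innerVar_inv_pow, coeff_zero_expInner_mul_C_mul_innerVar_inv_pow]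
  norm_num [Nat.factorial]
  ring

theorem f_xy_eq : f_xy = expDivArrangement 1 (-2) 1 := by
  simp only [f_xy, expDivArrangement, map_one, map_neg, map_ofNat, one_mul]
  ring

theorem f_x_xy_eq : f_x_xy = expDivArrangement 3 (-2) (-1) := by
  simp only [f_x_xy, expDivArrangement, map_one, map_neg, map_ofNat, neg_one_mul,
    ← sub_eq_add_neg]

theorem f_yx_eq : f_yx = expDivArrangement (-2) 1 1 := by
  simp only [f_yx, expDivArrangement, map_one, one_mul]
  ring

theorem f_y_xy_eq : f_y_xy = expDivArrangement (-3) 1 (-1) := by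
  simp only [f_y_xy, expDivArrangement, map_one, map_neg, neg_one_mul, ← sub_eq_add_neg]
  ring

/-- Both orthogonal-basis expansions of `CT^𝒜(e^{x-2y}/(xy(x+y)))` give `10/3`. -/
theorem ct_orthogonal_bases_agree :
    ICT2 f_xy + ICT2 f_x_xy = 10 / 3 ∧ ICT2 f_yx + ICT2 f_y_xy = 10 / 3 := by
  simp only [f_xy_eq, f_x_xy_eq, f_yx_eq, f_y_xy_eq, ICT2_expDivArrangement _ _ _ one_ne_zero,
    ICT2_expDivArrangement _ _ _ (neg_ne_zero.2 one_ne_zero)]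
  norm_num

end
end

section
/- The doubly-infinite series $\sum \frac{1}{mn(2m+n-1)}$, summed over all pairs of integers $(m,n)$ with $m \neq 0$, $n \neq 0$, and $2m + n \neq 1$, converges (in the sense of symmetric partial sums / principal value) and its value equals $\pi^2 - 8$. -/
set_option maxHeartbeats 1000000

open scoped Real
open Finset Filter Topology

/-- Harmonic numbers. -/
noncomputable def Hr (n : ℕ) : ℝ := ∑ i ∈ Finset.range n, 1 / ((i : ℝ) + 1)

lemma Hr_nonneg (n : ℕ) : 0 ≤ Hr n := by
  unfold Hr; positivity

lemma Hr_succ (n : ℕ) : Hr (n + 1) = Hr n + 1 / ((n : ℝ) + 1) := by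
  unfold Hr; rw [Finset.sum_range_succ]

lemma Hr_mono : Monotone Hr := by
  apply monotone_nat_of_le_succ
  intro n
  rw [Hr_succ]
  have : 0 ≤ 1 / ((n : ℝ) + 1) := by positivity
  linarith

lemma Hr_le_two_sqrt (n : ℕ) : Hr n ≤ 2 * Real.sqrt n := by
  induction n with
  | zero => simp [Hr]
  | succ n ih =>
    rw [Hr_succ]
    set s := Real.sqrt n with hs
    set t := Real.sqrt (n + 1) with ht
    have hs0 : 0 ≤ s := Real.sqrt_nonneg _
    have ht0 : 0 ≤ t := Real.sqrt_nonneg _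
    have hs2 : s ^ 2 = n := Real.sq_sqrt (by positivity)
    have ht2 : t ^ 2 = (n : ℝ) + 1 := by
      rw [ht]
      rw [show ((n : ℝ) + 1) = ((n + 1 : ℕ) : ℝ) by push_cast; ring] at *
      exact Real.sq_sqrt (by positivity)
    have ht1 : 1 ≤ t := by
      rw [ht, show (1 : ℝ) = Real.sqrt 1 by simp]
      exact Real.sqrt_le_sqrt (by simp)
    have htle : t ≤ (n : ℝ) + 1 := by nlinarith [ht2, ht1]
    have key : 1 / ((n : ℝ) + 1) ≤ 2 * (t - s) := by
      have hts : s ≤ t := by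
        rw [hs, ht]; exact Real.sqrt_le_sqrt (by push_cast; linarith)
      rw [div_le_iff₀ (by positivity)]
      nlinarith [hs2, ht2, hts, htle, hs0]
    have hcast : ((n : ℝ) + 1) = ((n + 1 : ℕ) : ℝ) := by push_cast; ring
    rw [show ((n + 1 : ℕ) : ℝ) = (n : ℝ) + 1 by push_cast; ring]
    linarith

/-- Telescoping partial sums with gap `a`. -/
lemma sum_tele (u : ℕ → ℝ) (a N : ℕ) :
    ∑ k ∈ Finset.range N, (u k - u (k + a)) =
      ∑ i ∈ Finset.range a, u i - ∑ i ∈ Finset.range a, u (N + i) := by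
  have h1 : ∑ i ∈ Finset.range (a + N), u i
      = ∑ i ∈ Finset.range a, u i + ∑ k ∈ Finset.range N, u (a + k) :=
    Finset.sum_range_add u a N
  have h2 : ∑ i ∈ Finset.range (N + a), u i
      = ∑ i ∈ Finset.range N, u i + ∑ i ∈ Finset.range a, u (N + i) :=
    Finset.sum_range_add u N a
  rw [Finset.sum_sub_distrib]
  have h3 : ∑ k ∈ Finset.range N, u (k + a) = ∑ k ∈ Finset.range N, u (a + k) :=
    Finset.sum_congr rfl fun k _ => by rw [add_comm]
  rw [h3]
  rw [add_comm a N] at h1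
  linarith

lemma hasSum_tele (u : ℕ → ℝ) (a : ℕ)
    (hsum : Summable (fun k => u k - u (k + a)))
    (h0 : Filter.Tendsto u Filter.atTop (nhds 0)) :
    HasSum (fun k => u k - u (k + a)) (∑ i ∈ Finset.range a, u i) := by
  have h1 := hsum.hasSum.tendsto_sum_nat
  have htail : Filter.Tendsto (fun N => ∑ i ∈ Finset.range a, u (N + i))
      Filter.atTop (nhds 0) := by
    have h := tendsto_finset_sum (Finset.range a)
      (fun i _ => h0.comp (tendsto_add_atTop_nat i))
    simpa using h
  have h2 : Filter.Tendsto (fun N => ∑ k ∈ Finset.range N, (u k - u (k + a)))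
      Filter.atTop (nhds (∑ i ∈ Finset.range a, u i)) := by
    simp_rw [sum_tele u a]
    simpa using tendsto_const_nhds.sub htail
  have heq := tendsto_nhds_unique h1 h2
  have := hsum.hasSum
  rwa [heq] at this

lemma summable_one_div_sq_succ : Summable (fun k : ℕ => 1 / ((k : ℝ) + 1) ^ 2) := by
  have h := (summable_nat_add_iff 1).mpr
    (Real.summable_one_div_nat_pow.mpr (by norm_num : 1 < 2))
  refine h.congr fun k => ?_
  push_cast
  ring

lemma tendsto_one_div_shift (b c : ℝ) (hb : 0 < b) :
    Filter.Tendsto (fun k : ℕ => 1 / (b * (k : ℝ) + c)) Filter.atTop (nhds 0) := by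
  simp_rw [one_div]
  apply Filter.Tendsto.inv_tendsto_atTop
  apply Filter.tendsto_atTop_add_const_right
  exact (tendsto_natCast_atTop_atTop (R := ℝ)).const_mul_atTop hb

/-- Key telescoping sum: `∑_{k≥0} 1/((k+1)(k+1+a)) = Hr a / a`. -/
lemma hasSum_L1' (a : ℕ) (ha : 1 ≤ a) :
    HasSum (fun k : ℕ => 1 / (((k : ℝ) + 1) * ((k : ℝ) + 1 + a))) (Hr a / a) := by
  have haR : (0 : ℝ) < a := by exact_mod_cast ha
  set u : ℕ → ℝ := fun k => 1 / ((k : ℝ) + 1) with hu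
  have key : ∀ k : ℕ, u k - u (k + a) = a * (1 / (((k : ℝ) + 1) * ((k : ℝ) + 1 + a))) := by
    intro k
    have h1 : ((k : ℝ) + 1) ≠ 0 := by positivity
    have h2 : ((k : ℝ) + 1 + a) ≠ 0 := by positivity
    have ha0 : (a : ℝ) ≠ 0 := ne_of_gt haR
    simp only [hu]
    have hcast : ((k + a : ℕ) : ℝ) + 1 = (↑k + 1) + ↑a := by push_cast; ring
    rw [hcast, div_sub_div _ _ h1 h2, mul_one_div]
    congr 1 <;> ring
  have hsummable : Summable (fun k : ℕ => 1 / (((k : ℝ) + 1) * ((k : ℝ) + 1 + a))) := by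
    apply Summable.of_nonneg_of_le (fun k => by positivity) _ summable_one_div_sq_succ
    intro k
    apply one_div_le_one_div_of_le (by positivity)
    have : (k : ℝ) + 1 ≤ (k : ℝ) + 1 + a := by linarith
    nlinarith [Nat.cast_nonneg (α := ℝ) k]
  have hsum2 : Summable (fun k => u k - u (k + a)) := by
    refine ((hsummable.mul_left (a : ℝ)).congr fun k => ?_)
    rw [key k]
  have h0 : Filter.Tendsto u Filter.atTop (nhds 0) := by
    have := tendsto_one_div_shift 1 1 (by norm_num)
    simpa [hu] using this
  have htele := hasSum_tele u a hsum2 h0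
  have hHr : ∑ i ∈ Finset.range a, u i = Hr a := rfl
  rw [hHr] at htele
  have := htele.mul_left (1 / (a : ℝ))
  have heq : (fun k => 1 / (a : ℝ) * (u k - u (k + a)))
      = fun k : ℕ => 1 / (((k : ℝ) + 1) * ((k : ℝ) + 1 + a)) := by
    funext k
    rw [key k]
    field_simp
  rw [heq] at this
  rwa [show 1 / (a : ℝ) * Hr a = Hr a / a by ring] at this

lemma sum_inv_reflect (b : ℕ) :
    ∑ k ∈ Finset.range b, (1 : ℝ) / ((b : ℝ) - k) = Hr b := by
  rw [Hr, ← Finset.sum_range_reflect (fun j => (1 : ℝ) / ((j : ℝ) + 1)) b]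
  refine Finset.sum_congr rfl fun k hk => ?_
  rw [Finset.mem_range] at hk
  have h1 : 1 ≤ b := by omega
  have h2 : k ≤ b - 1 := by omega
  rw [show ((b - 1 - k : ℕ) : ℝ) = (b : ℝ) - 1 - k by
    rw [Nat.cast_sub h2, Nat.cast_sub h1]; push_cast; ring]
  ring_nf

/-- Head sum: `∑_{k<a} 1/((k+1)((k+1)-a)) = -2 Hr (a-1) / a`. -/
lemma Fa_eq (a : ℕ) (ha : 1 ≤ a) :
    ∑ k ∈ Finset.range a, (1 : ℝ) / (((k : ℝ) + 1) * (((k : ℝ) + 1) - a))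
      = -(2 * Hr (a - 1) / a) := by
  obtain ⟨b, rfl⟩ : ∃ b, a = b + 1 := ⟨a - 1, by omega⟩
  rw [Finset.sum_range_succ]
  have hlast : (1 : ℝ) / (((b : ℝ) + 1) * (((b : ℝ) + 1) - ((b + 1 : ℕ) : ℝ))) = 0 := by
    push_cast
    simp
  rw [hlast, add_zero]
  have hterm : ∀ k ∈ Finset.range b,
      (1 : ℝ) / (((k : ℝ) + 1) * (((k : ℝ) + 1) - ((b + 1 : ℕ) : ℝ)))
        = -(1 / ((b : ℝ) + 1)) * (1 / ((k : ℝ) + 1) + 1 / ((b : ℝ) - k)) := by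
    intro k hk
    rw [Finset.mem_range] at hk
    have h1 : ((k : ℝ) + 1) ≠ 0 := by positivity
    have hkb : (k : ℝ) < b := by exact_mod_cast hk
    have h2 : ((b : ℝ) - k) ≠ 0 := sub_ne_zero.mpr (ne_of_gt hkb)
    have h3 : ((k : ℝ) - b) ≠ 0 := sub_ne_zero.mpr (ne_of_lt hkb)
    have h4 : ((b : ℝ) + 1) ≠ 0 := by positivity
    push_cast
    rw [show (k : ℝ) + 1 - ((b : ℝ) + 1) = (k : ℝ) - b by ring]
    field_simp
    ring
  rw [Finset.sum_congr rfl hterm, ← Finset.mul_sum, Finset.sum_add_distrib, sum_inv_reflect]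
  have : ∑ k ∈ Finset.range b, (1 : ℝ) / ((k : ℝ) + 1) = Hr b := rfl
  rw [this]
  have : (b + 1 : ℕ) - 1 = b := by omega
  rw [this]
  push_cast
  ring

/-- Negative-side sum: `∑_{k≥0} 1/((k+1)((k+1)-a)) = Hr a / a - 2 Hr (a-1) / a`. -/
lemma hasSum_L2 (a : ℕ) (ha : 1 ≤ a) :
    HasSum (fun k : ℕ => 1 / (((k : ℝ) + 1) * (((k : ℝ) + 1) - a)))
      (Hr a / a - 2 * Hr (a - 1) / a) := by
  set f2 : ℕ → ℝ := fun k => 1 / (((k : ℝ) + 1) * (((k : ℝ) + 1) - a)) with hf2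
  have hshift : HasSum (fun n : ℕ => f2 (n + a))
      ((Hr a / a - 2 * Hr (a - 1) / a) - ∑ i ∈ Finset.range a, f2 i) := by
    have heq : (fun n : ℕ => f2 (n + a))
        = fun n : ℕ => 1 / (((n : ℝ) + 1) * ((n : ℝ) + 1 + a)) := by
      funext n
      simp only [hf2]
      push_cast
      rw [show (n : ℝ) + (a : ℝ) + 1 - a = (n : ℝ) + 1 by ring,
        show ((n : ℝ) + (a : ℝ) + 1) = ((n : ℝ) + 1 + a) by ring,
        mul_comm ((n : ℝ) + 1 + (a : ℝ)) ((n : ℝ) + 1)]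
    rw [heq, show ∑ i ∈ Finset.range a, f2 i = -(2 * Hr (a - 1) / a) from Fa_eq a ha,
      show (Hr a / a - 2 * Hr (a - 1) / a) - -(2 * Hr (a - 1) / a) = Hr a / a by ring]
    exact hasSum_L1' a ha
  exact (hasSum_nat_add_iff' a).mp hshift

lemma Fa_abs_eq (a : ℕ) (ha : 1 ≤ a) :
    ∑ k ∈ Finset.range a, (1 : ℝ) / (((k : ℝ) + 1) * |((k : ℝ) + 1) - a|)
      = 2 * Hr (a - 1) / a := by
  obtain ⟨b, rfl⟩ : ∃ b, a = b + 1 := ⟨a - 1, by omega⟩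
  rw [Finset.sum_range_succ]
  have hlast : (1 : ℝ) / (((b : ℝ) + 1) * |((b : ℝ) + 1) - ((b + 1 : ℕ) : ℝ)|) = 0 := by
    push_cast
    simp
  rw [hlast, add_zero]
  have hterm : ∀ k ∈ Finset.range b,
      (1 : ℝ) / (((k : ℝ) + 1) * |((k : ℝ) + 1) - ((b + 1 : ℕ) : ℝ)|)
        = (1 / ((b : ℝ) + 1)) * (1 / ((k : ℝ) + 1) + 1 / ((b : ℝ) - k)) := by
    intro k hk
    rw [Finset.mem_range] at hk
    have h1 : ((k : ℝ) + 1) ≠ 0 := by positivity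
    have hkb : (k : ℝ) < b := by exact_mod_cast hk
    have h2 : (0 : ℝ) < (b : ℝ) - k := by linarith
    have h4 : ((b : ℝ) + 1) ≠ 0 := by positivity
    push_cast
    rw [show (k : ℝ) + 1 - ((b : ℝ) + 1) = -((b : ℝ) - k) by ring, abs_neg,
      abs_of_pos h2]
    field_simp
    ring
  rw [Finset.sum_congr rfl hterm, ← Finset.mul_sum, Finset.sum_add_distrib, sum_inv_reflect]
  have : ∑ k ∈ Finset.range b, (1 : ℝ) / ((k : ℝ) + 1) = Hr b := rfl
  rw [this, show (b + 1 : ℕ) - 1 = b by omega]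
  push_cast
  ring

lemma hasSum_L2abs (a : ℕ) (ha : 1 ≤ a) :
    HasSum (fun k : ℕ => 1 / (((k : ℝ) + 1) * |((k : ℝ) + 1) - a|))
      (Hr a / a + 2 * Hr (a - 1) / a) := by
  set f2 : ℕ → ℝ := fun k => 1 / (((k : ℝ) + 1) * |((k : ℝ) + 1) - a|) with hf2
  have hshift : HasSum (fun n : ℕ => f2 (n + a))
      ((Hr a / a + 2 * Hr (a - 1) / a) - ∑ i ∈ Finset.range a, f2 i) := by
    have heq : (fun n : ℕ => f2 (n + a))
        = fun n : ℕ => 1 / (((n : ℝ) + 1) * ((n : ℝ) + 1 + a)) := by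
      funext n
      simp only [hf2]
      push_cast
      rw [show (n : ℝ) + (a : ℝ) + 1 - a = (n : ℝ) + 1 by ring,
        abs_of_pos (by positivity : (0:ℝ) < (n : ℝ) + 1),
        show ((n : ℝ) + (a : ℝ) + 1) = ((n : ℝ) + 1 + a) by ring,
        mul_comm ((n : ℝ) + 1 + (a : ℝ)) ((n : ℝ) + 1)]
    rw [heq, show ∑ i ∈ Finset.range a, f2 i = 2 * Hr (a - 1) / a from Fa_abs_eq a ha,
      show (Hr a / a + 2 * Hr (a - 1) / a) - 2 * Hr (a - 1) / a = Hr a / a by ring]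
    exact hasSum_L1' a ha
  exact (hasSum_nat_add_iff' a).mp hshift

lemma hasSum_nat_part (a : ℕ) (ha : 1 ≤ a) :
    HasSum (fun k : ℕ => 1 / ((k : ℝ) * ((k : ℝ) + a))) (Hr a / a) := by
  have h1 : HasSum (fun k : ℕ => 1 / ((((k + 1) : ℕ) : ℝ) * ((((k + 1) : ℕ) : ℝ) + a)))
      (Hr a / a) := by
    have heq : (fun k : ℕ => 1 / ((((k + 1) : ℕ) : ℝ) * ((((k + 1) : ℕ) : ℝ) + a)))
        = fun k : ℕ => 1 / (((k : ℝ) + 1) * ((k : ℝ) + 1 + a)) := by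
      funext k; push_cast; ring_nf
    rw [heq]
    exact hasSum_L1' a ha
  have h2 := (hasSum_nat_add_iff
    (f := fun k : ℕ => 1 / ((k : ℝ) * ((k : ℝ) + a))) 1).mp h1
  simpa using h2

/-- Signed inner sum over `ℤ`, positive parameter. -/
lemma inner_pos (a : ℕ) (ha : 1 ≤ a) :
    HasSum (fun n : ℤ => 1 / ((n : ℝ) * ((n : ℝ) + a))) (2 / (a : ℝ) ^ 2) := by
  have haR : (0 : ℝ) < a := by exact_mod_cast ha
  set F : ℤ → ℝ := fun n => 1 / ((n : ℝ) * ((n : ℝ) + a)) with hF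
  have hf₁ : HasSum (fun k : ℕ => F ↑k) (Hr a / a) := by
    have heq : (fun k : ℕ => F ↑k) = fun k : ℕ => 1 / ((k : ℝ) * ((k : ℝ) + a)) := by
      funext k; simp only [hF]; push_cast; ring_nf
    rw [heq]; exact hasSum_nat_part a ha
  have hf₂ : HasSum (fun k : ℕ => F (-(↑k + 1)))
      (Hr a / a - 2 * Hr (a - 1) / a) := by
    have heq : (fun k : ℕ => F (-(↑k + 1)))
        = fun k : ℕ => 1 / (((k : ℝ) + 1) * (((k : ℝ) + 1) - a)) := by
      funext k
      simp only [hF]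
      push_cast
      rw [show (-((k : ℝ) + 1)) * (-((k : ℝ) + 1) + a) = ((k : ℝ) + 1) * (((k : ℝ) + 1) - a)
        by ring]
    rw [heq]; exact hasSum_L2 a ha
  have htotal := hf₁.of_nat_of_neg_add_one hf₂
  have hHr : Hr a = Hr (a - 1) + 1 / (a : ℝ) := by
    obtain ⟨b, rfl⟩ : ∃ b, a = b + 1 := ⟨a - 1, by omega⟩
    rw [show (b + 1) - 1 = b by omega, Hr_succ]
    push_cast
    ring
  have hval : Hr a / a + (Hr a / a - 2 * Hr (a - 1) / a) = 2 / (a : ℝ) ^ 2 := by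
    rw [hHr]
    field_simp
    ring
  rwa [hval] at htotal

/-- Absolute inner sum over `ℤ`, positive parameter. -/
lemma innerabs_pos (a : ℕ) (ha : 1 ≤ a) :
    HasSum (fun n : ℤ => 1 / |(n : ℝ) * ((n : ℝ) + a)|)
      (2 * Hr a / a + 2 * Hr (a - 1) / a) := by
  set F : ℤ → ℝ := fun n => 1 / |(n : ℝ) * ((n : ℝ) + a)| with hF
  have hf₁ : HasSum (fun k : ℕ => F ↑k) (Hr a / a) := by
    have heq : (fun k : ℕ => F ↑k) = fun k : ℕ => 1 / ((k : ℝ) * ((k : ℝ) + a)) := by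
      funext k
      simp only [hF]
      push_cast
      rw [abs_of_nonneg (by positivity : (0:ℝ) ≤ (k : ℝ) * ((k : ℝ) + a))]
    rw [heq]; exact hasSum_nat_part a ha
  have hf₂ : HasSum (fun k : ℕ => F (-(↑k + 1)))
      (Hr a / a + 2 * Hr (a - 1) / a) := by
    have heq : (fun k : ℕ => F (-(↑k + 1)))
        = fun k : ℕ => 1 / (((k : ℝ) + 1) * |((k : ℝ) + 1) - a|) := by
      funext k
      simp only [hF]
      push_cast
      rw [show (-((k : ℝ) + 1)) * (-((k : ℝ) + 1) + a) = ((k : ℝ) + 1) * (((k : ℝ) + 1) - a)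
        by ring, abs_mul, abs_of_pos (by positivity : (0:ℝ) < (k : ℝ) + 1)]
    rw [heq]; exact hasSum_L2abs a ha
  have htotal := hf₁.of_nat_of_neg_add_one hf₂
  have hval : Hr a / a + (Hr a / a + 2 * Hr (a - 1) / a)
      = 2 * Hr a / a + 2 * Hr (a - 1) / a := by ring
  rwa [hval] at htotal

/-- Signed inner sum over `ℤ` for any nonzero integer parameter. -/
lemma innerInt_sum (c : ℤ) (hc : c ≠ 0) :
    HasSum (fun n : ℤ => 1 / ((n : ℝ) * ((n : ℝ) + c))) (2 / (c : ℝ) ^ 2) := by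
  rcases lt_or_gt_of_ne hc with hneg | hpos
  · set a : ℕ := c.natAbs with hadef
    have ha : 1 ≤ a := Int.natAbs_pos.mpr hc
    have hca : ((a : ℕ) : ℝ) = -(c : ℝ) := by
      rw [hadef, Nat.cast_natAbs, Int.cast_abs,
        abs_of_neg (by exact_mod_cast hneg : (c:ℝ) < 0)]
    have h := inner_pos a ha
    rw [← (Equiv.neg ℤ).hasSum_iff]
    have heq : ((fun n : ℤ => 1 / ((n : ℝ) * ((n : ℝ) + c))) ∘ (Equiv.neg ℤ))
        = fun n : ℤ => 1 / ((n : ℝ) * ((n : ℝ) + a)) := by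
      funext n
      simp only [Function.comp_apply, Equiv.neg_apply]
      push_cast
      rw [hca, show (-(n : ℝ)) * (-(n : ℝ) + c) = (n : ℝ) * ((n : ℝ) + -(c : ℝ)) by ring]
    rw [heq]
    have hval : (2 : ℝ) / (a : ℝ) ^ 2 = 2 / (c : ℝ) ^ 2 := by
      rw [hca]; ring_nf
    rwa [hval] at h
  · set a : ℕ := c.natAbs with hadef
    have ha : 1 ≤ a := Int.natAbs_pos.mpr hc
    have hca : ((a : ℕ) : ℝ) = (c : ℝ) := by
      rw [hadef, Nat.cast_natAbs, Int.cast_abs,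
        abs_of_pos (by exact_mod_cast hpos : (0:ℝ) < c)]
    have h := inner_pos a ha
    rw [hca] at h
    exact h

/-- Absolute inner sum over `ℤ` for any nonzero integer parameter. -/
lemma innerabs_sum (c : ℤ) (hc : c ≠ 0) :
    HasSum (fun n : ℤ => 1 / |(n : ℝ) * ((n : ℝ) + c)|)
      (2 * Hr c.natAbs / (c.natAbs : ℝ) + 2 * Hr (c.natAbs - 1) / (c.natAbs : ℝ)) := by
  rcases lt_or_gt_of_ne hc with hneg | hpos
  · have ha : 1 ≤ c.natAbs := Int.natAbs_pos.mpr hc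
    have hca : ((c.natAbs : ℕ) : ℝ) = -(c : ℝ) := by
      rw [Nat.cast_natAbs, Int.cast_abs,
        abs_of_neg (by exact_mod_cast hneg : (c:ℝ) < 0)]
    have h := innerabs_pos c.natAbs ha
    rw [← (Equiv.neg ℤ).hasSum_iff]
    have heq : ((fun n : ℤ => 1 / |(n : ℝ) * ((n : ℝ) + c)|) ∘ (Equiv.neg ℤ))
        = fun n : ℤ => 1 / |(n : ℝ) * ((n : ℝ) + (c.natAbs : ℝ))| := by
      funext n
      simp only [Function.comp_apply, Equiv.neg_apply]
      push_cast
      rw [hca, show (-(n : ℝ)) * (-(n : ℝ) + c) = (n : ℝ) * ((n : ℝ) + -(c : ℝ)) by ring]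
    rw [heq]
    exact h
  · have ha : 1 ≤ c.natAbs := Int.natAbs_pos.mpr hc
    have hca : ((c.natAbs : ℕ) : ℝ) = (c : ℝ) := by
      rw [Nat.cast_natAbs, Int.cast_abs,
        abs_of_pos (by exact_mod_cast hpos : (0:ℝ) < c)]
    have h := innerabs_pos c.natAbs ha
    rw [← hca]
    exact h

/-- The fiberwise sums. -/
noncomputable def gg (m : ℤ) : ℝ := 2 / ((m : ℝ) * (2 * (m : ℝ) - 1) ^ 2)

lemma pieceB (m : ℤ) :
    HasSum (fun n : ℤ => 1 / ((m : ℝ) * (n : ℝ) * (2 * (m : ℝ) + (n : ℝ) - 1))) (gg m) := by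
  rcases eq_or_ne m 0 with rfl | hm
  · have h1 : (fun n : ℤ => 1 / (((0 : ℤ) : ℝ) * (n : ℝ) * (2 * ((0 : ℤ) : ℝ) + (n : ℝ) - 1)))
        = fun _ : ℤ => (0 : ℝ) := by
      funext n; norm_num
    have h2 : gg 0 = 0 := by norm_num [gg]
    rw [h1, h2]
    exact hasSum_zero
  · have hc : (2 * m - 1 : ℤ) ≠ 0 := by omega
    have h := (innerInt_sum (2 * m - 1) hc).mul_left (1 / (m : ℝ))
    have heq : (fun n : ℤ => 1 / (m : ℝ) * (1 / ((n : ℝ) * ((n : ℝ) + ((2 * m - 1 : ℤ) : ℝ)))))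
        = fun n : ℤ => 1 / ((m : ℝ) * (n : ℝ) * (2 * (m : ℝ) + (n : ℝ) - 1)) := by
      funext n
      rw [div_mul_div_comm, one_mul]
      congr 1
      push_cast
      ring
    have hval : 1 / (m : ℝ) * (2 / ((2 * m - 1 : ℤ) : ℝ) ^ 2) = gg m := by
      rw [div_mul_div_comm, one_mul, gg]
      congr 1
      push_cast
      ring
    rw [heq, hval] at h
    exact h

lemma hasSum_oddsq : HasSum (fun k : ℕ => 1 / (2 * (k : ℝ) + 1) ^ 2) (π ^ 2 / 8) := by
  have basel := hasSum_zeta_two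
  have heven : HasSum (fun k : ℕ => 1 / (((2 * k : ℕ)) : ℝ) ^ 2) (1 / 4 * (π ^ 2 / 6)) := by
    have h4 := basel.mul_left (1 / 4)
    have heq : (fun n : ℕ => 1 / 4 * (1 / (n : ℝ) ^ 2))
        = fun n : ℕ => 1 / (((2 * n : ℕ)) : ℝ) ^ 2 := by
      funext n
      rw [div_mul_div_comm, one_mul]
      congr 1
      push_cast
      ring
    rwa [heq] at h4
  have hodd_sum : Summable (fun k : ℕ => 1 / (((2 * k + 1 : ℕ)) : ℝ) ^ 2) :=
    basel.summable.comp_injective (fun a b h => by omega)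
  have hodd := hodd_sum.hasSum
  have hsplit := HasSum.even_add_odd (f := fun n : ℕ => 1 / (n : ℝ) ^ 2) heven hodd
  have hO : (∑' k : ℕ, 1 / (((2 * k + 1 : ℕ)) : ℝ) ^ 2) = π ^ 2 / 8 := by
    have := hsplit.unique basel
    linarith
  rw [hO] at hodd
  have heq : (fun k : ℕ => 1 / (((2 * k + 1 : ℕ)) : ℝ) ^ 2)
      = fun k : ℕ => 1 / (2 * (k : ℝ) + 1) ^ 2 := by
    funext k; push_cast; ring_nf
  rwa [heq] at hodd

lemma hasSum_tel2 :
    HasSum (fun k : ℕ => 1 / (2 * (k : ℝ) + 1) - 1 / (2 * (k : ℝ) + 3)) 1 := by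
  set u : ℕ → ℝ := fun k => 1 / (2 * (k : ℝ) + 1) with hu
  have hterm : ∀ k : ℕ, u k - u (k + 1)
      = 1 / (2 * (k : ℝ) + 1) - 1 / (2 * (k : ℝ) + 3) := by
    intro k; simp only [hu]; push_cast; ring_nf
  have hterm2 : ∀ k : ℕ, u k - u (k + 1) = 2 * (1 / ((2 * (k : ℝ) + 1) * (2 * (k : ℝ) + 3))) := by
    intro k
    rw [hterm k]
    have h1 : (2 * (k : ℝ) + 1) ≠ 0 := by positivity
    have h2 : (2 * (k : ℝ) + 3) ≠ 0 := by positivity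
    rw [div_sub_div _ _ h1 h2, mul_one_div]
    congr 1
    ring
  have hsum : Summable (fun k => u k - u (k + 1)) := by
    apply Summable.of_nonneg_of_le _ _ (summable_one_div_sq_succ.mul_left 2)
    · intro k
      rw [hterm2 k]
      positivity
    · intro k
      rw [hterm2 k]
      apply mul_le_mul_of_nonneg_left _ (by norm_num : (0:ℝ) ≤ 2)
      apply one_div_le_one_div_of_le (by positivity)
      nlinarith [Nat.cast_nonneg (α := ℝ) k]
  have h0 : Filter.Tendsto u Filter.atTop (nhds 0) := by
    have := tendsto_one_div_shift 2 1 (by norm_num)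
    simpa [hu] using this
  have h := hasSum_tele u 1 hsum h0
  rw [Finset.sum_range_one] at h
  have hu0 : u 0 = 1 := by simp [hu]
  rw [hu0] at h
  have heq : (fun k => u k - u (k + 1))
      = fun k : ℕ => 1 / (2 * (k : ℝ) + 1) - 1 / (2 * (k : ℝ) + 3) := funext hterm
  rwa [heq] at h

lemma gg_pos_eq (k : ℕ) : gg ((k : ℤ) + 1) = 2 / (((k : ℝ) + 1) * (2 * (k : ℝ) + 1) ^ 2) := by
  simp only [gg]
  push_cast
  congr 1
  ring

lemma gg_neg_eq (k : ℕ) : gg (-((k : ℤ) + 1)) = -(2 / (((k : ℝ) + 1) * (2 * (k : ℝ) + 3) ^ 2)) := by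
  simp only [gg]
  push_cast
  rw [show (-((k : ℝ) + 1)) * (2 * -((k : ℝ) + 1) - 1) ^ 2
      = -(((k : ℝ) + 1) * (2 * (k : ℝ) + 3) ^ 2) by ring, div_neg]

lemma summable_gg_pos : Summable (fun k : ℕ => gg ((k : ℤ) + 1)) := by
  apply Summable.of_nonneg_of_le _ _ (summable_one_div_sq_succ.mul_left 2)
  · intro k
    rw [gg_pos_eq k]
    positivity
  · intro k
    rw [gg_pos_eq k, show (2:ℝ) * (1 / ((k : ℝ) + 1) ^ 2) = 2 / ((k : ℝ) + 1) ^ 2 by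
      rw [mul_one_div]]
    apply div_le_div_of_nonneg_left (by norm_num) (by positivity)
    nlinarith [Nat.cast_nonneg (α := ℝ) k]

lemma summable_gg_neg : Summable (fun k : ℕ => gg (-((k : ℤ) + 1))) := by
  rw [← summable_neg_iff]
  apply Summable.of_nonneg_of_le _ _ (summable_one_div_sq_succ.mul_left 2)
  · intro k
    rw [gg_neg_eq k, neg_neg]
    positivity
  · intro k
    rw [gg_neg_eq k, neg_neg, show (2:ℝ) * (1 / ((k : ℝ) + 1) ^ 2) = 2 / ((k : ℝ) + 1) ^ 2 by
      rw [mul_one_div]]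
    apply div_le_div_of_nonneg_left (by norm_num) (by positivity)
    nlinarith [Nat.cast_nonneg (α := ℝ) k]

lemma hasSum_pair : HasSum (fun k : ℕ => gg ((k : ℤ) + 1) + gg (-((k : ℤ) + 1))) (π ^ 2 - 8) := by
  have h1 := hasSum_oddsq.mul_left 4
  have hshift : HasSum (fun k : ℕ => 1 / (2 * (k : ℝ) + 3) ^ 2) (π ^ 2 / 8 - 1) := by
    have hval : (π ^ 2 / 8 - 1) + ∑ i ∈ Finset.range 1, 1 / (2 * (i : ℝ) + 1) ^ 2
        = π ^ 2 / 8 := by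
      rw [Finset.sum_range_one]
      norm_num
    have h2 := (hasSum_nat_add_iff (f := fun k : ℕ => 1 / (2 * (k : ℝ) + 1) ^ 2)
      (g := π ^ 2 / 8 - 1) 1).mpr (by rw [hval]; exact hasSum_oddsq)
    have heq : (fun k : ℕ => 1 / (2 * (((k + 1 : ℕ)) : ℝ) + 1) ^ 2)
        = fun k : ℕ => 1 / (2 * (k : ℝ) + 3) ^ 2 := by
      funext k; push_cast; ring_nf
    rwa [heq] at h2
  have h2 := hshift.mul_left 4
  have h3 := hasSum_tel2.mul_left 4
  have H := (h1.add h2).sub h3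
  have hval : 4 * (π ^ 2 / 8) + 4 * (π ^ 2 / 8 - 1) - 4 * 1 = π ^ 2 - 8 := by ring
  rw [hval] at H
  have heq : (fun k : ℕ => 4 * (1 / (2 * (k : ℝ) + 1) ^ 2) + 4 * (1 / (2 * (k : ℝ) + 3) ^ 2)
      - 4 * (1 / (2 * (k : ℝ) + 1) - 1 / (2 * (k : ℝ) + 3)))
      = fun k : ℕ => gg ((k : ℤ) + 1) + gg (-((k : ℤ) + 1)) := by
    funext k
    rw [gg_pos_eq k, gg_neg_eq k]
    have d1 : ((k : ℝ) + 1) ≠ 0 := by positivity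
    have d2 : (2 * (k : ℝ) + 1) ≠ 0 := by positivity
    have d3 : (2 * (k : ℝ) + 3) ≠ 0 := by positivity
    field_simp
    ring
  rwa [heq] at H

lemma hasSum_gg : HasSum gg (π ^ 2 - 8) := by
  have hP := summable_gg_pos
  have hN := summable_gg_neg
  have hval : (∑' k : ℕ, gg ((k : ℤ) + 1)) + (∑' k : ℕ, gg (-((k : ℤ) + 1))) = π ^ 2 - 8 :=
    (hP.hasSum.add hN.hasSum).unique hasSum_pair
  have h0 : HasSum (fun k : ℕ => gg (k : ℤ)) (∑' k : ℕ, gg ((k : ℤ) + 1)) := by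
    have heq : (fun k : ℕ => gg ((k + 1 : ℕ) : ℤ)) = fun k : ℕ => gg ((k : ℤ) + 1) := by
      funext k
      have hcast : ((k + 1 : ℕ) : ℤ) = (k : ℤ) + 1 := by push_cast; ring
      rw [hcast]
    have h := (hasSum_nat_add_iff (f := fun k : ℕ => gg (k : ℤ)) 1).mp (by
      rw [heq]; exact hP.hasSum)
    have hz : ∑ i ∈ Finset.range 1, gg (i : ℤ) = 0 := by
      rw [Finset.sum_range_one]
      norm_num [gg]
    rwa [hz, add_zero] at h
  have hfinal := h0.of_nat_of_neg_add_one hN.hasSum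
  rwa [hval] at hfinal

/-- Absolute fiberwise sums. -/
noncomputable def Aa (m : ℤ) : ℝ :=
  (1 / |(m : ℝ)|) * (2 * Hr (2 * m - 1).natAbs / ((2 * m - 1).natAbs : ℝ)
    + 2 * Hr ((2 * m - 1).natAbs - 1) / ((2 * m - 1).natAbs : ℝ))

lemma pieceA_fiber (m : ℤ) :
    HasSum (fun n : ℤ => |1 / ((m : ℝ) * (n : ℝ) * (2 * (m : ℝ) + (n : ℝ) - 1))|) (Aa m) := by
  rcases eq_or_ne m 0 with rfl | hm
  · have h1 : (fun n : ℤ => |1 / (((0:ℤ) : ℝ) * (n : ℝ) * (2 * ((0:ℤ) : ℝ) + (n : ℝ) - 1))|)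
        = fun _ : ℤ => (0 : ℝ) := by
      funext n; norm_num
    have h2 : Aa 0 = 0 := by norm_num [Aa]
    rw [h1, h2]; exact hasSum_zero
  · have hc : (2 * m - 1 : ℤ) ≠ 0 := by omega
    have h := (innerabs_sum (2 * m - 1) hc).mul_left (1 / |(m : ℝ)|)
    have heq : (fun n : ℤ => 1 / |(m : ℝ)| * (1 / |(n : ℝ) * ((n : ℝ) + ((2 * m - 1 : ℤ) : ℝ))|))
        = fun n : ℤ => |1 / ((m : ℝ) * (n : ℝ) * (2 * (m : ℝ) + (n : ℝ) - 1))| := by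
      funext n
      rw [show (m : ℝ) * (n : ℝ) * (2 * (m : ℝ) + (n : ℝ) - 1)
          = (m : ℝ) * ((n : ℝ) * ((n : ℝ) + ((2 * m - 1 : ℤ) : ℝ))) by push_cast; ring,
        abs_div, abs_one, abs_mul ((m : ℝ)), div_mul_div_comm, one_mul]
    rw [heq] at h
    exact h

noncomputable def psi (m : ℤ) : ℝ := 4 * Hr (3 * m.natAbs) / ((m.natAbs : ℝ)) ^ 2

lemma Aa_nonneg (m : ℤ) : 0 ≤ Aa m := by
  unfold Aa
  have h1 := Hr_nonneg (2 * m - 1).natAbs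
  have h2 := Hr_nonneg ((2 * m - 1).natAbs - 1)
  apply mul_nonneg (by positivity)
  apply add_nonneg
  · exact div_nonneg (by linarith) (Nat.cast_nonneg _)
  · exact div_nonneg (by linarith) (Nat.cast_nonneg _)

lemma Aa_le_psi (m : ℤ) : Aa m ≤ psi m := by
  rcases eq_or_ne m 0 with rfl | hm
  · have h1 : Aa 0 = 0 := by norm_num [Aa]
    have h2 : psi 0 = 0 := by norm_num [psi]
    rw [h1, h2]
  · have ha : 1 ≤ (2 * m - 1).natAbs := Int.natAbs_pos.mpr (by omega)
    have hμ : 1 ≤ m.natAbs := Int.natAbs_pos.mpr hm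
    have hμa : m.natAbs ≤ (2 * m - 1).natAbs := by omega
    have ha3 : (2 * m - 1).natAbs ≤ 3 * m.natAbs := by omega
    have hμR : (0:ℝ) < (m.natAbs : ℝ) := by exact_mod_cast hμ
    have haR : (0:ℝ) < ((2 * m - 1).natAbs : ℝ) := by exact_mod_cast ha
    have hμaR : (m.natAbs : ℝ) ≤ ((2 * m - 1).natAbs : ℝ) := by exact_mod_cast hμa
    have habs : |(m : ℝ)| = (m.natAbs : ℝ) := by
      rw [Nat.cast_natAbs, Int.cast_abs]
    have e1 : Hr (2 * m - 1).natAbs ≤ Hr (3 * m.natAbs) := Hr_mono ha3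
    have e2 : Hr ((2 * m - 1).natAbs - 1) ≤ Hr (3 * m.natAbs) := Hr_mono (by omega)
    have hH3 : 0 ≤ Hr (3 * m.natAbs) := Hr_nonneg _
    have step1 : Aa m ≤ (1 / (m.natAbs : ℝ))
        * (2 * Hr (3 * m.natAbs) / (m.natAbs : ℝ) + 2 * Hr (3 * m.natAbs) / (m.natAbs : ℝ)) := by
      unfold Aa
      rw [habs]
      apply mul_le_mul_of_nonneg_left _ (by positivity)
      apply add_le_add
      · apply div_le_div₀ (by linarith) (by linarith) hμR hμaR
      · apply div_le_div₀ (by linarith) (by linarith) hμR hμaR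
    have step2 : (1 / (m.natAbs : ℝ))
        * (2 * Hr (3 * m.natAbs) / (m.natAbs : ℝ) + 2 * Hr (3 * m.natAbs) / (m.natAbs : ℝ))
        = psi m := by
      unfold psi
      field_simp
      ring
    linarith [step1, step2.le, step2.ge]

lemma sqrt_div_eq (k : ℕ) : Real.sqrt k / (k:ℝ)^2 = 1 / (k:ℝ) ^ ((3:ℝ)/2) := by
  rcases Nat.eq_zero_or_pos k with rfl | hk
  · norm_num [Real.zero_rpow]
  · have hx : (0:ℝ) < k := by exact_mod_cast hk
    have hr : (0:ℝ) < (k:ℝ) ^ ((3:ℝ)/2) := Real.rpow_pos_of_pos hx _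
    rw [div_eq_div_iff (by positivity) hr.ne', one_mul, Real.sqrt_eq_rpow,
      ← Real.rpow_add hx, show (1:ℝ)/2 + 3/2 = 2 by norm_num,
      show (2:ℝ) = ((2:ℕ):ℝ) by norm_num, Real.rpow_natCast]

lemma summable_psi_nat : Summable (fun k : ℕ => 4 * Hr (3 * k) / (k:ℝ)^2) := by
  apply Summable.of_nonneg_of_le _ _
    ((Real.summable_one_div_nat_rpow.mpr (by norm_num : (1:ℝ) < 3/2)).mul_left 16)
  · intro k
    have := Hr_nonneg (3 * k)
    exact div_nonneg (by linarith) (by positivity)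
  · intro k
    rcases Nat.eq_zero_or_pos k with rfl | hk
    · norm_num [Hr, Real.zero_rpow]
    · have hx : (0:ℝ) < k := by exact_mod_cast hk
      have hb : Hr (3 * k) ≤ 2 * Real.sqrt (3 * (k:ℝ)) := by
        have h := Hr_le_two_sqrt (3 * k)
        rwa [show (((3 * k : ℕ)) : ℝ) = 3 * (k:ℝ) by push_cast; ring] at h
      have hs : Real.sqrt (3 * (k:ℝ)) ≤ 2 * Real.sqrt k := by
        have h1 : Real.sqrt (3 * (k:ℝ)) ≤ Real.sqrt (4 * (k:ℝ)) :=
          Real.sqrt_le_sqrt (by linarith)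
        have h4 : Real.sqrt (4 * (k:ℝ)) = 2 * Real.sqrt k := by
          rw [show (4:ℝ) * (k:ℝ) = (2 * Real.sqrt k)^2 by
            rw [mul_pow, Real.sq_sqrt hx.le]; norm_num]
          exact Real.sqrt_sq (by positivity)
        linarith
      have hnum : 4 * Hr (3 * k) ≤ 16 * Real.sqrt k := by
        nlinarith [hb, hs, Real.sqrt_nonneg (k:ℝ)]
      rw [show (16:ℝ) * (1 / (k:ℝ) ^ ((3:ℝ)/2)) = (16 * Real.sqrt k) / (k:ℝ)^2 by
        rw [← sqrt_div_eq k]; ring]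
      exact div_le_div₀ (by positivity) hnum (by positivity) le_rfl

lemma summable_psi : Summable psi := by
  apply Summable.of_nat_of_neg
  · refine summable_psi_nat.congr fun k => ?_
    simp [psi]
  · refine summable_psi_nat.congr fun k => ?_
    simp [psi]

lemma pieceA :
    Summable (fun p : ℤ × ℤ =>
      1 / ((p.1 : ℝ) * (p.2 : ℝ) * (2 * (p.1 : ℝ) + (p.2 : ℝ) - 1))) := by
  rw [← summable_abs_iff]
  apply (summable_prod_of_nonneg (f := fun p : ℤ × ℤ =>
      |1 / ((p.1 : ℝ) * (p.2 : ℝ) * (2 * (p.1 : ℝ) + (p.2 : ℝ) - 1))|)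
      (fun p => abs_nonneg _)).mpr
  constructor
  · intro m
    exact (pieceA_fiber m).summable
  · have heq : (fun m : ℤ => ∑' n : ℤ,
        |1 / ((m : ℝ) * (n : ℝ) * (2 * (m : ℝ) + (n : ℝ) - 1))|) = Aa :=
      funext fun m => (pieceA_fiber m).tsum_eq
    rw [heq]
    exact Summable.of_nonneg_of_le Aa_nonneg Aa_le_psi summable_psi

/-- The series `∑ 1/(m n (2m+n-1))` over pairs of integers `(m,n)` with `m ≠ 0`, `n ≠ 0`,
`2m + n ≠ 1` converges and has sum `π² - 8`.  (Terms where any factor of the denominator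
vanishes are `0` by the convention `1/0 = 0`, which exactly excludes the forbidden pairs.) -/
theorem sum_inv_mn_2mn_sub_one :
    HasSum (fun p : ℤ × ℤ =>
        1 / ((p.1 : ℝ) * (p.2 : ℝ) * (2 * (p.1 : ℝ) + (p.2 : ℝ) - 1)))
      (π ^ 2 - 8) := by
  have h1 := pieceA.hasSum
  have h2 : HasSum gg (∑' p : ℤ × ℤ,
      1 / ((p.1 : ℝ) * (p.2 : ℝ) * (2 * (p.1 : ℝ) + (p.2 : ℝ) - 1))) :=
    h1.prod_fiberwise fun m => pieceB m
  have h3 := h2.unique hasSum_gg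
  rwa [h3] at h1
end

section
/- Let $\Delta$ be the convex hull of the $W$-orbit of $\rho$ for the root system $D_n$ (with $W$ the Weyl group acting by coordinate permutations and even sign changes on $\mathbb{R}^n$), where $\rho = \sum_{i=1}^n (n-i)\delta_i$. Then for each rescaled fundamental weight $\omega_m$ (normalized by $(\theta, \omega_m) = 2n-2$ with $\theta = \delta_1 + \delta_2$), the vector $\rho - \omega_m$ lies in $\Delta$. -/
open Finset

/-- For the root system `Dₙ` in `ℝⁿ` (coordinates `0,…,n-1`), with
`ρ = (n-1, n-2, …, 1, 0)` and the rescaled fundamental weights `ωₘ` (normalized by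
`(θ, ωₘ) = 2n-2`), the vector `ρ - ωₘ` lies in the convex hull `Δ` of the Weyl orbit of
`ρ`, the Weyl group acting by coordinate permutations composed with an even number of
sign changes. -/
theorem Dn_rho_sub_omega_mem_hull (n : ℕ) (hn : 2 ≤ n) (m : ℕ) (hm1 : 1 ≤ m)
    (hmn : m ≤ n) (ρ ω : Fin n → ℝ)
    (hρ : ∀ i, ρ i = (n : ℝ) - 1 - (i : ℕ))
    (hω : ∀ i, ω i =
      if m = 1 then (if (i : ℕ) = 0 then 2 * ((n : ℝ) - 1) else 0)
      else if m = n - 1 then (n : ℝ) - 1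
      else if m = n then (if (i : ℕ) < n - 1 then (n : ℝ) - 1 else -((n : ℝ) - 1))
      else (if (i : ℕ) < m then (n : ℝ) - 1 else 0)) :
    (fun i => ρ i - ω i) ∈ convexHull ℝ
      {w : Fin n → ℝ | ∃ σ : Equiv.Perm (Fin n), ∃ e : Fin n → ℝ,
        (∀ i, e i = 1 ∨ e i = -1) ∧ (∏ i, e i) = 1 ∧ w = fun i => e i * ρ (σ i)} := by
  classical
  -- natural-number "bound" vector
  set U : Fin n → ℕ := fun i =>
    if m = 1 then n - 1 - i else if (i : ℕ) < m then (i : ℕ) else n - 1 - i + m with hU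
  set u : Fin n → ℝ := fun i => ((U i : ℕ) : ℝ) with hu
  have hUlt : ∀ i : Fin n, U i ≤ n - 1 := by
    intro i; rw [hU]; dsimp only; have := i.isLt; split_ifs <;> omega
  -- the coordinate where u vanishes
  set i₀n : ℕ := if m = 1 then n - 1 else 0 with hi₀n
  have hi₀lt : i₀n < n := by rw [hi₀n]; split_ifs <;> omega
  set i₀ : Fin n := ⟨i₀n, hi₀lt⟩ with hi₀
  have hUzero : ∀ i : Fin n, U i = 0 ↔ (i : ℕ) = i₀n := by
    intro i; rw [hU, hi₀n]; dsimp only; have := i.isLt; split_ifs <;> omega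
  have hu_i₀ : u i₀ = 0 := by
    rw [hu]; dsimp only
    have : U i₀ = 0 := (hUzero i₀).2 rfl
    rw [this]; norm_num
  have hu_ne : ∀ i : Fin n, i ≠ i₀ → u i ≠ 0 := by
    intro i hi
    rw [hu]; dsimp only
    have hval : (i : ℕ) ≠ i₀n := by
      intro h; exact hi (Fin.ext h)
    have : U i ≠ 0 := fun h => hval ((hUzero i).1 h)
    exact_mod_cast this
  have hu0 : ∀ i, (0 : ℝ) ≤ u i := by
    intro i; rw [hu]; positivity
  -- the permutation
  have hUinj : ∀ a b : Fin n, U a = U b → a = b := by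
    intro a b hab
    apply Fin.ext
    revert hab; rw [hU]; dsimp only
    have := a.isLt; have := b.isLt
    split_ifs <;> omega
  set f : Fin n → Fin n := fun i => ⟨n - 1 - U i, by omega⟩ with hf
  have hfinj : Function.Injective f := by
    intro a b hab
    rw [hf] at hab
    have h1 := congrArg Fin.val hab
    dsimp only at h1
    have ha := hUlt a; have hb := hUlt b
    exact hUinj a b (by omega)
  have hfbij : Function.Bijective f := Finite.injective_iff_bijective.mp hfinj
  have hρf : ∀ i : Fin n, ρ (f i) = u i := by
    intro i
    rw [hρ, hu]; dsimp only
    have h : (n - 1 - U i) + (U i + 1) = n := by have := hUlt i; omega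
    have h2 := congrArg (fun k : ℕ => (k : ℝ)) h
    push_cast at h2
    have : ((f i : ℕ) : ℝ) = ((n - 1 - U i : ℕ) : ℝ) := by rw [hf]
    rw [this]; linarith
  -- casting facts
  have hi0 : ∀ i : Fin n, (0 : ℝ) ≤ ((i : ℕ) : ℝ) := fun i => Nat.cast_nonneg _
  have hiN : ∀ i : Fin n, ((i : ℕ) : ℝ) ≤ (n : ℝ) - 1 := by
    intro i
    have h1 : (i : ℕ) + 1 ≤ n := i.isLt
    have := (Nat.cast_le (α := ℝ)).2 h1
    push_cast at this; linarith
  have hmR : (m : ℝ) ≤ (n : ℝ) := by exact_mod_cast hmn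
  have hm1R : (1 : ℝ) ≤ (m : ℝ) := by exact_mod_cast hm1
  have hnR : (2 : ℝ) ≤ (n : ℝ) := by exact_mod_cast hn
  -- the coordinatewise bounds
  have hbounds : ∀ i : Fin n, -(u i) ≤ ρ i - ω i ∧ ρ i - ω i ≤ u i := by
    intro i
    have hiLt := i.isLt
    have hca : ((n - 1 - (i : ℕ) : ℕ) : ℝ) = (n : ℝ) - 1 - ((i : ℕ) : ℝ) := by
      have h : (n - 1 - (i : ℕ)) + ((i : ℕ) + 1) = n := by omega
      have h2' := congrArg (fun k : ℕ => (k : ℝ)) h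
      push_cast at h2'; linarith
    have hcb : ((n - 1 - (i : ℕ) + m : ℕ) : ℝ)
        = (n : ℝ) - 1 - ((i : ℕ) : ℝ) + (m : ℝ) := by
      rw [Nat.cast_add, hca]
    have hUi : u i = ((U i : ℕ) : ℝ) := by rw [hu]
    rw [hρ, hω, hUi, hU]; dsimp only
    by_cases h1 : m = 1
    · simp only [if_pos h1, hca]
      by_cases h2 : (i : ℕ) = 0
      · simp only [if_pos h2]
        have hi0' : ((i : ℕ) : ℝ) = 0 := by exact_mod_cast h2
        constructor <;> linarith [hiN i]
      · simp only [if_neg h2]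
        constructor <;> linarith [hiN i, hi0 i]
    · simp only [if_neg h1]
      by_cases h4 : (i : ℕ) < m
      · simp only [if_pos h4]
        have h4R : ((i : ℕ) : ℝ) < (m : ℝ) := by exact_mod_cast h4
        by_cases h3 : m = n - 1
        · simp only [if_pos h3]
          constructor <;> linarith [hi0 i]
        · simp only [if_neg h3]
          by_cases h5 : m = n
          · simp only [if_pos h5]
            by_cases h6 : (i : ℕ) < n - 1
            · simp only [if_pos h6]
              constructor <;> linarith [hi0 i]
            · simp only [if_neg h6]
              have hin1 : ((i : ℕ) : ℝ) = (n : ℝ) - 1 := by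
                have h : (i : ℕ) + 1 = n := by omega
                have h2' := congrArg (fun k : ℕ => (k : ℝ)) h
                push_cast at h2'; linarith
              constructor <;> linarith
          · simp only [if_neg h5]
            constructor <;> linarith [hi0 i]
      · simp only [if_neg h4, hcb]
        have h4R : (m : ℝ) ≤ ((i : ℕ) : ℝ) := by
          exact_mod_cast Nat.le_of_not_lt h4
        by_cases h3 : m = n - 1
        · simp only [if_pos h3]
          have hm' : (m : ℝ) = (n : ℝ) - 1 := by
            have h : m + 1 = n := by omega
            have h2' := congrArg (fun k : ℕ => (k : ℝ)) h
            push_cast at h2'; linarith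
          constructor <;> linarith [hiN i, hi0 i]
        · simp only [if_neg h3]
          by_cases h5 : m = n
          · exact absurd hiLt (by omega)
          · simp only [if_neg h5]
            constructor <;> linarith [hiN i, hi0 i]
  -- every sign pattern of u is in the orbit
  have hsub : (Set.univ.pi fun i => ({u i, -u i} : Set ℝ)) ⊆
      {w : Fin n → ℝ | ∃ σ : Equiv.Perm (Fin n), ∃ e : Fin n → ℝ,
        (∀ i, e i = 1 ∨ e i = -1) ∧ (∏ i, e i) = 1 ∧ w = fun i => e i * ρ (σ i)} := by
    intro w hw
    simp only [Set.mem_pi, Set.mem_univ, forall_true_left, Set.mem_insert_iff,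
      Set.mem_singleton_iff] at hw
    have hdiv : ∀ j : Fin n, j ≠ i₀ → (w j / u j = 1 ∨ w j / u j = -1) := by
      intro j hj
      rcases hw j with h | h
      · left; rw [h]; exact div_self (hu_ne j hj)
      · right; rw [h, neg_div, div_self (hu_ne j hj)]
    have hPpm : (∏ j ∈ Finset.univ.erase i₀, w j / u j) = 1 ∨
        (∏ j ∈ Finset.univ.erase i₀, w j / u j) = -1 := by
      refine Finset.prod_induction _ (fun x => x = 1 ∨ x = -1) ?_ (Or.inl rfl) ?_
      · rintro a b (ha | ha) (hb | hb) <;> rw [ha, hb] <;> norm_num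
      · intro j hj
        exact hdiv j (Finset.ne_of_mem_erase hj)
    refine ⟨Equiv.ofBijective f hfbij,
      fun i => if i = i₀ then (∏ j ∈ Finset.univ.erase i₀, w j / u j)
        else w i / u i, ?_, ?_, ?_⟩
    · intro i
      dsimp only
      by_cases hi : i = i₀
      · rw [if_pos hi]; exact hPpm
      · rw [if_neg hi]; exact hdiv i hi
    · rw [← Finset.mul_prod_erase Finset.univ _ (Finset.mem_univ i₀)]
      try dsimp only
      rw [if_pos rfl]
      have hPe : (∏ j ∈ Finset.univ.erase i₀,
          (if j = i₀ then (∏ j ∈ Finset.univ.erase i₀, w j / u j) else w j / u j))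
          = ∏ j ∈ Finset.univ.erase i₀, w j / u j :=
        Finset.prod_congr rfl fun j hj => if_neg (Finset.ne_of_mem_erase hj)
      rw [hPe]
      rcases hPpm with h | h <;> rw [h] <;> norm_num
    · funext i
      have hσ : ρ ((Equiv.ofBijective f hfbij) i) = u i := hρf i
      dsimp only
      rw [hσ]
      by_cases hi : i = i₀
      · rw [if_pos hi, hi, hu_i₀, mul_zero]
        rcases hw i₀ with h | h <;> rw [h, hu_i₀] <;> norm_num
      · rw [if_neg hi, div_mul_cancel₀ _ (hu_ne i hi)]
  -- conclude
  have hmem : (fun i => ρ i - ω i) ∈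
      convexHull ℝ (Set.univ.pi fun i => ({u i, -u i} : Set ℝ)) := by
    apply mem_convexHull_pi
    intro i _
    rw [Set.pair_comm, convexHull_pair,
      segment_eq_Icc (by linarith [hu0 i] : -(u i) ≤ u i)]
    exact ⟨(hbounds i).1, (hbounds i).2⟩
  exact convexHull_mono hsub hmem
end
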